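/- arXiv:1512.06202 — 3 statements merged into one kernel-verified Lean document; each statement's English description precedes it below -/
import Mathlib

section
/- Let c > 1/4 be a real constant. If G is a finite simple graph on n vertices such that every proper induced subgraph H of G satisfies α₁(H) + τ_B(H) ≤ c·n(H)², but α₁(G) + τ_B(G) > c·n², then the clique number of G satisfies ω(G) < 1/(4c−1). -/
open SimpleGraph Finset

variable {V : Type*} [Fintype V] [DecidableEq V]

/-- `A` is a triangle-independent edge set of `G`: a set of edges of `G`
containing at most one edge from each triangle of `G`. -/
def IsTriangleIndep (G : SimpleGraph V) (A : Finset (Sym2 V)) : Prop :=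
  (A : Set (Sym2 V)) ⊆ G.edgeSet ∧
    ∀ a b c : V, G.Adj a b → G.Adj b c → G.Adj a c →
      ({s(a, b), s(b, c), s(a, c)} ∩ A).card ≤ 1

/-- `α₁(G)`: the maximum size of a triangle-independent set in `G`. -/
noncomputable def alphaOne (G : SimpleGraph V) : ℕ :=
  sSup {k | ∃ A : Finset (Sym2 V), IsTriangleIndep G A ∧ A.card = k}

/-- `τ_B(G)`: the minimum size of an edge set of `G` whose deletion makes `G` bipartite. -/
noncomputable def tauB (G : SimpleGraph V) : ℕ :=
  sInf {k | ∃ D : Finset (Sym2 V), (D : Set (Sym2 V)) ⊆ G.edgeSet ∧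
    (G.deleteEdges (D : Set (Sym2 V))).Colorable 2 ∧ D.card = k}

/-- `b(G)`: the maximum size of a vertex set inducing a bipartite subgraph of `G`. -/
noncomputable def bipNum (G : SimpleGraph V) : ℕ :=
  sSup {k | ∃ B : Finset V, (G.induce (B : Set V)).Colorable 2 ∧ B.card = k}

/-!
Let `K` be a maximum clique, `w = |K|`, and `S = Kᶜ`, `m = |S|`. A triangle-independent
set meets the clique `K` in a matching and contains at most one edge from each vertex of `S`
to `K`, so `α₁(G) ≤ α₁(G[S]) + ⌊w/2⌋ + m`. For `τ_B`, glue an optimal bipartition of `G[S]`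
to a split of `K` into two halves, or to its swap: one of the two choices leaves at most half
of the `≤ m (w - 1)` edges between `S` and `K` monochromatic (maximality of `K`), so
`τ_B(G) ≤ τ_B(G[S]) + τ_B(K_w) + m (w - 1) / 2`, and `α₁(K_w) + τ_B(K_w) ≤ w² / 4`.
With minimality on `G[S]` this gives `α₁(G) + τ_B(G) ≤ c m² + w² / 4 + m (w + 1) / 2`,
which is at most `c (m + w)²` once `w (4c - 1) ≥ 1`.
-/

open scoped Classical

section

variable {G : SimpleGraph V} {A : Finset (Sym2 V)}

theorem bddAbove_card_isTriangleIndep (G : SimpleGraph V) :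
    BddAbove {k | ∃ A : Finset (Sym2 V), IsTriangleIndep G A ∧ #A = k} :=
  ⟨Fintype.card (Sym2 V), by rintro k ⟨A, -, rfl⟩; exact card_le_univ A⟩

theorem IsTriangleIndep.card_le_alphaOne (hA : IsTriangleIndep G A) :
    #A ≤ alphaOne G :=
  le_csSup (bddAbove_card_isTriangleIndep G) ⟨A, hA, rfl⟩

theorem exists_isTriangleIndep_card_eq_alphaOne (G : SimpleGraph V) :
    ∃ A : Finset (Sym2 V), IsTriangleIndep G A ∧ #A = alphaOne G :=
  Nat.sSup_mem (s := {k | ∃ A : Finset (Sym2 V), IsTriangleIndep G A ∧ #A = k})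
    ⟨0, ∅, ⟨by simp, by simp⟩, rfl⟩ (bddAbove_card_isTriangleIndep G)

noncomputable def monoEdges (G : SimpleGraph V) (f : V → Fin 2) : Finset (Sym2 V) :=
  {e ∈ G.edgeFinset | (e.map f).IsDiag}

omit [DecidableEq V] in
theorem colorable_deleteEdges_monoEdges (f : V → Fin 2) :
    (G.deleteEdges (monoEdges G f : Set (Sym2 V))).Colorable 2 := by
  refine ⟨Coloring.mk f fun {x y} hxy hf => ?_⟩
  rw [deleteEdges_adj] at hxy
  exact hxy.2 (mem_filter.2 ⟨mem_edgeFinset.2 hxy.1, by simp [hf]⟩)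

omit [DecidableEq V] in
theorem tauB_le_card_monoEdges (f : V → Fin 2) : tauB G ≤ #(monoEdges G f) :=
  Nat.sInf_le ⟨monoEdges G f, fun _ he => mem_edgeFinset.1 (mem_filter.1 he).1,
    colorable_deleteEdges_monoEdges f, rfl⟩

omit [DecidableEq V] in
theorem exists_card_monoEdges_le_tauB (G : SimpleGraph V) :
    ∃ f : V → Fin 2, #(monoEdges G f) ≤ tauB G := by
  obtain ⟨D, -, ⟨C⟩, hD⟩ : tauB G ∈ _ := Nat.sInf_mem ⟨_, monoEdges G 0,
    fun _ he => mem_edgeFinset.1 (mem_filter.1 he).1, colorable_deleteEdges_monoEdges 0, rfl⟩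
  refine ⟨C, hD ▸ card_le_card fun e he => ?_⟩
  induction e using Sym2.ind with
  | _ x y =>
    obtain ⟨hxy, hC⟩ := mem_filter.1 he
    by_contra hxyD
    exact C.valid (deleteEdges_adj.2 ⟨mem_edgeFinset.1 hxy, hxyD⟩) (by simpa using hC)

theorem card_le_card_filter_add_card_filter_add (X : Finset (Sym2 V)) (S : Finset V) :
    #X ≤ #{e ∈ X | ∀ v ∈ e, v ∈ S} + #{e ∈ X | ∀ v ∈ e, v ∈ Sᶜ} +
      #{p ∈ S ×ˢ Sᶜ | s(p.1, p.2) ∈ X} := by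
  calc #X ≤ #({e ∈ X | ∀ v ∈ e, v ∈ S} ∪ {e ∈ X | ∀ v ∈ e, v ∈ Sᶜ} ∪
        {p ∈ S ×ˢ Sᶜ | s(p.1, p.2) ∈ X}.image fun p => s(p.1, p.2)) := card_le_card ?_
    _ ≤ _ := (card_union_le _ _).trans (add_le_add (card_union_le _ _) card_image_le)
  intro e he
  induction e using Sym2.ind with
  | _ x y =>
    simp only [mem_union, mem_filter, mem_image, mem_product, mem_compl, Sym2.mem_iff,
      forall_eq_or_imp, forall_eq, Prod.exists]
    by_cases hx : x ∈ S <;> by_cases hy : y ∈ S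
    · exact .inl (.inl ⟨he, hx, hy⟩)
    · exact .inr ⟨x, y, ⟨⟨hx, hy⟩, he⟩, rfl⟩
    · exact .inr ⟨y, x, ⟨⟨hy, hx⟩, Sym2.eq_swap ▸ he⟩, Sym2.eq_swap⟩
    · exact .inl (.inr ⟨he, hx, hy⟩)

noncomputable def restrictEdges (S : Finset V) (X : Finset (Sym2 V)) :
    Finset (Sym2 (S : Set V)) :=
  X.preimage (Sym2.map Subtype.val) (Sym2.map.injective Subtype.val_injective).injOn

omit [Fintype V] [DecidableEq V] in
@[simp]
theorem mem_restrictEdges {S : Finset V} {X : Finset (Sym2 V)} {e : Sym2 (S : Set V)} :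
    e ∈ restrictEdges S X ↔ e.map Subtype.val ∈ X :=
  mem_preimage

theorem card_restrictEdges (S : Finset V) (X : Finset (Sym2 V)) :
    #(restrictEdges S X) = #{e ∈ X | ∀ v ∈ e, v ∈ S} := by
  rw [restrictEdges, card_preimage]
  refine congrArg card <|
    filter_congr fun e _ => ⟨?_, fun h => ⟨_, Sym2.attachWith_map_subtypeVal h⟩⟩
  rintro ⟨e, rfl⟩ v hv
  obtain ⟨w, -, rfl⟩ := Sym2.mem_map.1 hv
  exact w.2

omit [Fintype V] in
theorem IsTriangleIndep.restrictEdges (hA : IsTriangleIndep G A)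
    (S : Finset V) : IsTriangleIndep (G.induce S) (restrictEdges S A) := by
  refine ⟨fun e he => ?_, fun a b c hab hbc hac => (hA.2 a b c hab hbc hac).trans' ?_⟩
  · induction e using Sym2.ind with
    | _ x y => simpa using hA.1 (mem_restrictEdges.1 he)
  · refine card_le_card_of_injOn (Sym2.map Subtype.val) (fun e he => ?_)
      (Sym2.map.injective Subtype.val_injective).injOn
    simp only [coe_inter, Set.mem_inter_iff, mem_coe, mem_restrictEdges, mem_insert,
      mem_singleton] at he ⊢
    refine ⟨?_, he.2⟩
    rcases he.1 with rfl | rfl | rfl <;> simp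

omit [DecidableEq V] in
theorem monoEdges_induce (S : Finset V) (f : V → Fin 2) :
    monoEdges (G.induce S) (f ∘ Subtype.val) = restrictEdges S (monoEdges G f) := by
  ext e
  induction e using Sym2.ind with
  | _ x y => rw [mem_restrictEdges]; simp [monoEdges]

omit [Fintype V] in
theorem IsTriangleIndep.not_adj (hA : IsTriangleIndep G A) {x a b : V} (ha : s(x, a) ∈ A)
    (hb : s(x, b) ∈ A) : ¬G.Adj a b := by
  intro hab
  have hxa : G.Adj x a := hA.1 ha
  have hxb : G.Adj x b := hA.1 hb
  refine (hA.2 x a b hxa hab hxb).not_gt (one_lt_card.2 ⟨s(x, a), ?_, s(x, b), ?_, ?_⟩) <;>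
    simp [ha, hb, hab.ne, hxa.ne, hxb.ne]

theorem IsTriangleIndep.two_mul_card_le_of_top (hA : IsTriangleIndep ⊤ A) :
    2 * #A ≤ Fintype.card V := by
  set H := fromEdgeSet (A : Set (Sym2 V))
  have hHA : H.edgeFinset = A := by
    rw [← coe_inj, coe_edgeFinset, edgeSet_fromEdgeSet, sdiff_eq_left,
      ← Set.subset_compl_iff_disjoint_right, ← edgeSet_top]
    exact hA.1
  have hdeg : ∀ v, H.degree v ≤ 1 := fun v => card_le_one.2 fun a ha b hb => by
    by_contra hab
    exact hA.not_adj ((fromEdgeSet_adj _).1 ((mem_neighborFinset ..).1 ha)).1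
      ((fromEdgeSet_adj _).1 ((mem_neighborFinset ..).1 hb)).1 hab
  calc 2 * #A = ∑ v, H.degree v := by
        rw [sum_degrees_eq_twice_card_edges]; convert congrArg (2 * #·) hHA.symm
    _ ≤ ∑ _v : V, 1 := sum_le_sum fun v _ => hdeg v
    _ = Fintype.card V := by simp

theorem two_mul_alphaOne_top_le : 2 * alphaOne (⊤ : SimpleGraph V) ≤ Fintype.card V := by
  obtain ⟨A, hA, hAcard⟩ := exists_isTriangleIndep_card_eq_alphaOne (⊤ : SimpleGraph V)
  exact hAcard ▸ hA.two_mul_card_le_of_top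

omit [Fintype V] in
theorem IsTriangleIndep.card_crossing_le (hA : IsTriangleIndep G A) {K : Finset V}
    (hK : G.IsClique (K : Set V)) (S : Finset V) :
    #{p ∈ S ×ˢ K | s(p.1, p.2) ∈ A} ≤ #S := by
  refine card_le_card_of_injOn Prod.fst (fun p hp => (mem_product.1 (mem_filter.1 hp).1).1) ?_
  rintro ⟨x, a⟩ hp ⟨y, b⟩ hq (rfl : x = y)
  simp only [coe_filter, mem_product, Set.mem_ofPred_eq] at hp hq
  by_contra hab
  exact hA.not_adj hp.2 hq.2 (hK hp.1.2 hq.1.2 fun h => hab (by rw [h]))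

theorem alphaOne_le_of_isClique_compl {S : Finset V}
    (hK : G.IsClique ((Sᶜ : Finset V) : Set V)) :
    alphaOne G ≤ alphaOne (G.induce S) + alphaOne (G.induce (Sᶜ : Finset V)) + #S := by
  obtain ⟨A, hA, hAcard⟩ := exists_isTriangleIndep_card_eq_alphaOne G
  rw [← hAcard]
  refine (card_le_card_filter_add_card_filter_add A S).trans (add_le_add (add_le_add ?_ ?_)
    (hA.card_crossing_le hK S))
  · exact card_restrictEdges S A ▸ (hA.restrictEdges S).card_le_alphaOne
  · exact card_restrictEdges Sᶜ A ▸ (hA.restrictEdges Sᶜ).card_le_alphaOne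

theorem card_monoEdges_le (S : Finset V) (f : V → Fin 2) :
    #(monoEdges G f) ≤ #(monoEdges (G.induce S) (f ∘ Subtype.val)) +
      #(monoEdges (G.induce (Sᶜ : Finset V)) (f ∘ Subtype.val)) +
      #{p ∈ G.interedges S Sᶜ | f p.1 = f p.2} := by
  rw [monoEdges_induce, monoEdges_induce, card_restrictEdges, card_restrictEdges]
  refine (card_le_card_filter_add_card_filter_add _ S).trans
    (Nat.add_le_add_left (card_le_card fun p hp => ?_) _)
  obtain ⟨hp, he⟩ := mem_filter.1 hp
  obtain ⟨hadj, hf⟩ := mem_filter.1 he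
  exact mem_filter.2 ⟨G.mem_interedges_iff.2 ⟨(mem_product.1 hp).1, (mem_product.1 hp).2,
    mem_edgeFinset.1 hadj⟩, by simpa using hf⟩

theorem tauB_le_choose_add_choose (U : Finset V) :
    tauB G ≤ (#U).choose 2 + (#Uᶜ).choose 2 := by
  let f : V → Fin 2 := fun v => if v ∈ U then 1 else 0
  have hcross : {p ∈ G.interedges U Uᶜ | f p.1 = f p.2} = ∅ :=
    filter_eq_empty_iff.2 fun p hp => by
      obtain ⟨h1, h2, -⟩ := G.mem_interedges_iff.1 hp
      simp [f, h1, mem_compl.1 h2]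
  have hmono (W : Finset V) :
      #(monoEdges (G.induce W) (f ∘ Subtype.val)) ≤ (#W).choose 2 :=
    calc _ ≤ #(G.induce W).edgeFinset := card_le_card (filter_subset _ _)
      _ ≤ _ := (G.induce W).card_edgeFinset_le_card_choose_two.trans_eq (by simp)
  calc tauB G ≤ #(monoEdges G f) := tauB_le_card_monoEdges f
    _ ≤ _ := (card_monoEdges_le U f).trans
      (by simpa [hcross] using add_le_add (hmono U) (hmono Uᶜ))

theorem alphaOne_add_tauB_top_le :
    (alphaOne (⊤ : SimpleGraph V) + tauB (⊤ : SimpleGraph V) : ℝ) ≤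
      Fintype.card V ^ 2 / 4 := by
  set n := Fintype.card V
  obtain ⟨U, -, hU⟩ := exists_subset_card_eq (s := (univ : Finset V)) (n := n / 2)
    (by simpa [n] using Nat.div_le_self n 2)
  have hα : alphaOne (⊤ : SimpleGraph V) ≤ n / 2 := by
    have := two_mul_alphaOne_top_le (V := V); omega
  have hτ : tauB (⊤ : SimpleGraph V) ≤ (n / 2).choose 2 + (n - n / 2).choose 2 := by
    simpa [hU, card_compl] using tauB_le_choose_add_choose (G := ⊤) U
  have hα' : (alphaOne (⊤ : SimpleGraph V) : ℝ) ≤ (n / 2 : ℕ) := mod_cast hα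
  have hτ' : (tauB (⊤ : SimpleGraph V) : ℝ) ≤
      (n / 2 : ℕ) * ((n / 2 : ℕ) - 1) / 2 +
        (n - n / 2 : ℕ) * ((n - n / 2 : ℕ) - 1) / 2 := by
    rw [← Nat.cast_choose_two, ← Nat.cast_choose_two]; exact_mod_cast hτ
  rcases Nat.even_or_odd' n with ⟨u, hu | hu⟩
  · rw [show n - n / 2 = u by omega, show n / 2 = u by omega] at hτ'
    rw [show n / 2 = u by omega] at hα'
    rw [hu]; push_cast; nlinarith
  · rw [show n - n / 2 = u + 1 by omega, show n / 2 = u by omega] at hτ'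
    rw [show n / 2 = u by omega] at hα'
    rw [hu]; push_cast at hτ' ⊢; nlinarith

theorem two_mul_tauB_le (S : Finset V) :
    2 * tauB G ≤ 2 * tauB (G.induce S) + 2 * tauB (G.induce (Sᶜ : Finset V)) +
      #(G.interedges S Sᶜ) := by
  obtain ⟨g₁, hg₁⟩ := exists_card_monoEdges_le_tauB (G.induce S)
  obtain ⟨g₂, hg₂⟩ := exists_card_monoEdges_le_tauB (G.induce (Sᶜ : Finset V))
  let f (b : Fin 2) (v : V) : Fin 2 :=
    if h : v ∈ S then g₁ ⟨v, h⟩ else g₂ ⟨v, by simpa using h⟩ + b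
  have hS (b : Fin 2) : f b ∘ Subtype.val = g₁ := funext fun v => dif_pos v.2
  have hSc (b : Fin 2) :
      monoEdges (G.induce (Sᶜ : Finset V)) (f b ∘ Subtype.val) =
        monoEdges (G.induce (Sᶜ : Finset V)) g₂ := by
    ext e
    induction e using Sym2.ind with
    | _ x y =>
      have hx : x.1 ∉ S := by simpa using x.2
      have hy : y.1 ∉ S := by simpa using y.2
      simp [monoEdges, f, hx, hy]
  -- Shifting the colours on `Sᶜ` makes exactly the other crossing edges monochromatic.
  have hcross : #{p ∈ G.interedges S Sᶜ | f 0 p.1 = f 0 p.2} +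
      #{p ∈ G.interedges S Sᶜ | f 1 p.1 = f 1 p.2} = #(G.interedges S Sᶜ) := by
    rw [← card_filter_add_card_filter_not (s := G.interedges S Sᶜ)
      (fun p => f 0 p.1 = f 0 p.2)]
    congr 2
    refine filter_congr fun p hp => ?_
    obtain ⟨h1, h2, -⟩ := G.mem_interedges_iff.1 hp
    simp only [f, dif_pos h1, dif_neg (mem_compl.1 h2)]
    generalize g₁ _ = x
    generalize g₂ _ = y
    revert x y
    decide
  have hb (b : Fin 2) :=
    (tauB_le_card_monoEdges (G := G) (f b)).trans (card_monoEdges_le S (f b))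
  simp only [hS, hSc] at hb
  have := hb 0
  have := hb 1
  omega

theorem card_interedges_compl_add_card_le {K : Finset V}
    (hK : Maximal G.IsClique (K : Set V)) :
    #(G.interedges Kᶜ K) + #Kᶜ ≤ #Kᶜ * #K := by
  rw [← G.card_interedges_add_card_interedges_compl disjoint_compl_left]
  refine Nat.add_le_add_left (card_le_card_of_surjOn Prod.fst fun v hv => ?_) _
  have hvK : v ∉ K := mem_compl.1 hv
  obtain ⟨k, hk, hvk⟩ : ∃ k ∈ K, ¬G.Adj v k := by
    by_contra! h
    exact hvK <| hK.2 (hK.1.insert fun k hk _ => h k hk) (Set.subset_insert _ _)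
      (Set.mem_insert _ _)
  have hvk' : Gᶜ.Adj v k := (G.compl_adj v k).2 ⟨fun h => hvK (h ▸ hk), hvk⟩
  exact ⟨(v, k), Gᶜ.mem_interedges_iff.2 ⟨hv, hk, hvk'⟩, rfl⟩

theorem alphaOne_add_tauB_le_of_maximal {K : Finset V}
    (hK : Maximal G.IsClique (K : Set V)) :
    (alphaOne G + tauB G : ℝ) ≤ alphaOne (G.induce (Kᶜ : Finset V)) +
      tauB (G.induce (Kᶜ : Finset V)) + (#K : ℝ) ^ 2 / 4 + #Kᶜ * (#K + 1) / 2 := by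
  have hα := alphaOne_le_of_isClique_compl (S := Kᶜ) (by simpa using hK.1)
  have hτ := two_mul_tauB_le (G := G) Kᶜ
  have hX := card_interedges_compl_add_card_le hK
  rw [compl_compl, induce_eq_top.2 hK.1] at hα hτ
  have htop := alphaOne_add_tauB_top_le (V := (K : Set V))
  rw [show Fintype.card (K : Set V) = #K by simp] at htop
  rify at hα hτ hX
  linarith

end

/-- If `c > 1/4` and `G` is a minimal counterexample to `α₁ + τ_B ≤ c n²`
(every proper induced subgraph satisfies the bound but `G` does not),
then `ω(G) < 1/(4c - 1)`. -/
theorem cliqueNum_lt_of_minimal_counterexample (c : ℝ) (hc : 1 / 4 < c) (G : SimpleGraph V)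
    (hmin : ∀ S : Finset V, S ≠ Finset.univ →
      (alphaOne (G.induce (S : Set V)) + tauB (G.induce (S : Set V)) : ℝ) ≤ c * (S.card : ℝ) ^ 2)
    (hG : c * (Fintype.card V : ℝ) ^ 2 < (alphaOne G + tauB G : ℝ)) :
    (G.cliqueNum : ℝ) < 1 / (4 * c - 1) := by
  obtain ⟨K, hK⟩ := G.maximumClique_exists
  rw [← G.maximumClique_card_eq_cliqueNum K hK]
  by_contra! hle
  have hc' : 0 < 4 * c - 1 := by linarith
  have hw : 1 ≤ (#K : ℝ) * (4 * c - 1) := (div_le_iff₀ hc').1 hle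
  have hKne : K.Nonempty := by
    by_contra! h
    norm_num [h] at hw
  have hS := hmin Kᶜ ((compl_ne_univ_iff_nonempty K).2 hKne)
  have hkey := alphaOne_add_tauB_le_of_maximal (hK.isMaximalClique K)
  have hn : (Fintype.card V : ℝ) = #Kᶜ + #K := mod_cast (card_compl_add_card K).symm
  rw [hn] at hG
  nlinarith [mul_nonneg (Nat.cast_nonneg (α := ℝ) #Kᶜ) (sub_nonneg.2 hw),
    mul_nonneg (sq_nonneg (#K : ℝ)) hc'.le]
end

section
/- For every K₅-free graph G on n vertices, τ_B(G) ≤ b(G)·(n − b(G))/2 + 3·(n − b(G))²/16. -/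
open SimpleGraph Finset

variable {V : Type*} [Fintype V] [DecidableEq V]

/-!
Let `B` be a largest vertex set inducing a bipartite graph and `R` its complement, `r = n - b`.
Properly 2-colour `G[B]` and colour the vertices of `R` one at a time, each with the colour that
makes at most half of its edges to the already coloured vertices monochromatic. Deleting the
monochromatic edges leaves a bipartite graph; they all meet `R`, so
`τ_B ≤ (e(R) + e(R, B)) / 2 ≤ (3r²/8 + br) / 2`, using Turán's bound `e(R) ≤ 3r²/8` for the
`K₅`-free graph `G[R]`.
-/

theorem SimpleGraph.CliqueFree.mul_card_edgeFinset_le {W : Type*} [Fintype W]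
    {H : SimpleGraph W} [DecidableRel H.Adj] {r : ℕ} (cf : H.CliqueFree (r + 1)) :
    2 * r * #H.edgeFinset ≤ (r - 1) * Fintype.card W ^ 2 := by
  rcases r.eq_zero_or_pos with rfl | hr
  · simp
  obtain ⟨T, _, hT⟩ := exists_isTuranMaximal (V := W) hr
  have iso := ((isTuranMaximal_iff_nonempty_iso_turanGraph hr).mp hT).some
  calc 2 * r * #H.edgeFinset ≤ 2 * r * #T.edgeFinset := Nat.mul_le_mul_left _ (hT.2 cf)
    _ = 2 * r * #(turanGraph (Fintype.card W) r).edgeFinset := by rw [iso.card_edgeFinset_eq]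
    _ ≤ (r - 1) * Fintype.card W ^ 2 := mul_card_edgeFinset_turanGraph_le

theorem SimpleGraph.CliqueFree.mul_card_edgeFinset_inter_sym2_le {G : SimpleGraph V}
    [DecidableRel G.Adj] {r : ℕ} (cf : G.CliqueFree (r + 1)) (S : Finset V) :
    2 * r * #(G.edgeFinset ∩ S.sym2) ≤ (r - 1) * #S ^ 2 := by
  have cfS : (G.induce (S : Set V)).CliqueFree (r + 1) :=
    (cliqueFree_induce_iff G (S : Set V) _).2 cf.cliqueFreeOn
  have hmap := map_edgeFinset_induce (G := G) (s := (S : Set V))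
  rw [Finset.toFinset_coe] at hmap
  rw [← hmap, card_map, ← Fintype.card_coe S]
  -- the two sides differ only in the `Fintype` instance on `↥S`
  convert cfS.mul_card_edgeFinset_le using 4
  simp

theorem card_filter_exists_mem_le (E : Finset (Sym2 V)) (R : Finset V) :
    #{e ∈ E | ∃ x ∈ e, x ∈ R} ≤ #(E ∩ R.sym2) + #R * #Rᶜ := by
  have hsub : {e ∈ E | ∃ x ∈ e, x ∈ R} ⊆ E ∩ R.sym2 ∪ (R ×ˢ Rᶜ).image (fun p => s(p.1, p.2)) := by
    intro e he
    obtain ⟨he, x, hxe, hxR⟩ := mem_filter.1 he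
    obtain ⟨y, rfl⟩ := Sym2.mem_iff_exists.1 hxe
    by_cases hyR : y ∈ R
    · exact mem_union_left _ (mem_inter.2 ⟨he, mk_mem_sym2_iff.2 ⟨hxR, hyR⟩⟩)
    · exact mem_union_right _ (mem_image_of_mem _ (mem_product.2 ⟨hxR, mem_compl.2 hyR⟩))
  calc #{e ∈ E | ∃ x ∈ e, x ∈ R} ≤ #(E ∩ R.sym2) + #((R ×ˢ Rᶜ).image (fun p => s(p.1, p.2))) :=
        (card_le_card hsub).trans (card_union_le _ _)
    _ ≤ #(E ∩ R.sym2) + #R * #Rᶜ := by grw [card_image_le, card_product]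

theorem exists_two_mul_card_filter_isDiag_map_update_le {α : Type*} [DecidableEq α]
    (g : α → Bool) (v : α) (E : Finset (Sym2 α)) (hE : ∀ e ∈ E, v ∈ e ∧ ¬ e.IsDiag) :
    ∃ c, 2 * #{e ∈ E | (e.map (Function.update g v c)).IsDiag} ≤ #E := by
  have hdisj : Disjoint {e ∈ E | (e.map (Function.update g v true)).IsDiag}
      {e ∈ E | (e.map (Function.update g v false)).IsDiag} := by
    refine disjoint_filter.2 fun e he htrue hfalse => ?_
    obtain ⟨hve, hdiag⟩ := hE e he
    obtain ⟨w, rfl⟩ := Sym2.mem_iff_exists.1 hve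
    have hwv : w ≠ v := fun h => hdiag (Sym2.mk_isDiag_iff.2 h.symm)
    simp only [Sym2.map_mk, Sym2.mk_isDiag_iff, Function.update_self,
      Function.update_of_ne hwv] at htrue hfalse
    exact Bool.noConfusion (htrue.trans hfalse.symm)
  have hsum := (card_union_of_disjoint hdisj).symm.trans_le
    (card_le_card (union_subset (filter_subset _ E) (filter_subset _ E)))
  by_cases h : #{e ∈ E | (e.map (Function.update g v true)).IsDiag} ≤
      #{e ∈ E | (e.map (Function.update g v false)).IsDiag}
  · exact ⟨true, by omega⟩
  · exact ⟨false, by omega⟩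

theorem exists_two_mul_card_monochromatic_le (G : SimpleGraph V) [DecidableRel G.Adj]
    (R : Finset V) (g₀ : V → Bool) :
    ∃ g : V → Bool, (∀ v ∉ R, g v = g₀ v) ∧
      2 * #{e ∈ G.edgeFinset | (∃ x ∈ e, x ∈ R) ∧ (e.map g).IsDiag} ≤
        #{e ∈ G.edgeFinset | ∃ x ∈ e, x ∈ R} := by
  induction R using Finset.induction_on generalizing g₀ with
  | empty => exact ⟨g₀, fun _ _ => rfl, by simp⟩
  | @insert v R hv ih =>
    set E := {e ∈ G.edgeFinset | v ∈ e ∧ ∀ x ∈ e, x ∉ R}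
    obtain ⟨c, hc⟩ := exists_two_mul_card_filter_isDiag_map_update_le g₀ v E fun e he =>
      ⟨(mem_filter.1 he).2.1, G.not_isDiag_of_mem_edgeSet (mem_edgeFinset.1 (mem_filter.1 he).1)⟩
    obtain ⟨g, hg, hR⟩ := ih (Function.update g₀ v c)
    refine ⟨g, fun w hw => ?_, ?_⟩
    · rw [mem_insert, not_or] at hw
      rw [hg w hw.2, Function.update_of_ne hw.1]
    have hE : ∀ e ∈ E, e.map g = e.map (Function.update g₀ v c) :=
      fun e he => Sym2.map_congr fun x hx => hg x ((mem_filter.1 he).2.2 x hx)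
    have hsplit : {e ∈ G.edgeFinset | ∃ x ∈ e, x ∈ insert v R} =
        {e ∈ G.edgeFinset | ∃ x ∈ e, x ∈ R} ∪ E := by
      ext e
      simp only [E, mem_filter, mem_union, mem_insert]
      grind
    have hdisj : Disjoint {e ∈ G.edgeFinset | ∃ x ∈ e, x ∈ R} E :=
      disjoint_filter.2 fun e _ ⟨x, hxe, hxR⟩ ⟨_, hR'⟩ => hR' x hxe hxR
    have hmono : {e ∈ G.edgeFinset | (∃ x ∈ e, x ∈ insert v R) ∧ (e.map g).IsDiag} ⊆
        {e ∈ G.edgeFinset | (∃ x ∈ e, x ∈ R) ∧ (e.map g).IsDiag} ∪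
          {e ∈ E | (e.map (Function.update g₀ v c)).IsDiag} := by
      intro e he
      obtain ⟨he, ⟨x, hxe, hx⟩, hdiag⟩ := mem_filter.1 he
      by_cases hR' : ∃ y ∈ e, y ∈ R
      · exact mem_union_left _ (mem_filter.2 ⟨he, hR', hdiag⟩)
      · push Not at hR'
        have heE : e ∈ E :=
          mem_filter.2 ⟨he, (mem_insert.1 hx).resolve_right (hR' x hxe) ▸ hxe, hR'⟩
        exact mem_union_right _ (mem_filter.2 ⟨heE, hE e heE ▸ hdiag⟩)
    calc 2 * #{e ∈ G.edgeFinset | (∃ x ∈ e, x ∈ insert v R) ∧ (e.map g).IsDiag}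
        ≤ 2 * #{e ∈ G.edgeFinset | (∃ x ∈ e, x ∈ R) ∧ (e.map g).IsDiag} +
          2 * #{e ∈ E | (e.map (Function.update g₀ v c)).IsDiag} := by
          grw [card_le_card hmono, card_union_le, mul_add]
      _ ≤ #{e ∈ G.edgeFinset | ∃ x ∈ e, x ∈ R} + #E := add_le_add hR hc
      _ = _ := by rw [hsplit, card_union_of_disjoint hdisj]

omit [DecidableEq V] in
theorem tauB_le_card_monochromatic (G : SimpleGraph V) [DecidableRel G.Adj] (g : V → Bool) :
    tauB G ≤ #{e ∈ G.edgeFinset | (e.map g).IsDiag} := by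
  set D := {e ∈ G.edgeFinset | (e.map g).IsDiag}
  have hD : (D : Set (Sym2 V)) ⊆ G.edgeSet := fun e he => mem_edgeFinset.1 (mem_filter.1 he).1
  let coloring : (G.deleteEdges (D : Set (Sym2 V))).Coloring Bool :=
    Coloring.mk g fun {a b} hab hgab => (G.deleteEdges_adj.1 hab).2 <|
      mem_filter.2 ⟨mem_edgeFinset.2 (G.deleteEdges_adj.1 hab).1, Sym2.mk_isDiag_iff.2 hgab⟩
  exact Nat.sInf_le ⟨D, hD, Fintype.card_bool ▸ coloring.colorable, rfl⟩

omit [DecidableEq V] in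
theorem exists_card_eq_bipNum (G : SimpleGraph V) :
    ∃ B : Finset V, (G.induce (B : Set V)).Colorable 2 ∧ #B = bipNum G := by
  refine Nat.sSup_mem (s := {k | ∃ B : Finset V, (G.induce (B : Set V)).Colorable 2 ∧ #B = k})
    ⟨0, ∅, ?_, card_empty⟩ ⟨Fintype.card V, ?_⟩
  · have : IsEmpty ((∅ : Finset V) : Set V) := by simp
    exact .of_isEmpty 2
  · rintro k ⟨B, -, rfl⟩
    exact card_le_univ B

theorem two_mul_tauB_le_of_colorable_induce (G : SimpleGraph V) [DecidableRel G.Adj]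
    {B : Finset V} (hB : (G.induce (B : Set V)).Colorable 2) :
    2 * tauB G ≤ #{e ∈ G.edgeFinset | ∃ x ∈ e, x ∈ Bᶜ} := by
  let c : (G.induce (B : Set V)).Coloring Bool := hB.toColoring (by simp)
  set g₀ : V → Bool := Function.extend Subtype.val c fun _ => false
  have hg₀ : ∀ a ∈ B, ∀ b ∈ B, G.Adj a b → g₀ a ≠ g₀ b := fun a ha b hb hab => by
    simpa only [g₀, Subtype.val_injective.extend_apply c _ ⟨a, ha⟩,
      Subtype.val_injective.extend_apply c _ ⟨b, hb⟩] using c.valid (G := G.induce (B : Set V))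
        (v := ⟨a, ha⟩) (w := ⟨b, hb⟩) hab
  obtain ⟨g, hg, hcount⟩ := exists_two_mul_card_monochromatic_le G Bᶜ g₀
  have hsub : {e ∈ G.edgeFinset | (e.map g).IsDiag} ⊆
      {e ∈ G.edgeFinset | (∃ x ∈ e, x ∈ Bᶜ) ∧ (e.map g).IsDiag} := by
    intro e he
    obtain ⟨he, hdiag⟩ := mem_filter.1 he
    refine mem_filter.2 ⟨he, ?_, hdiag⟩
    by_contra! hB'
    induction e with | h a b =>
    simp only [mem_compl, not_not, Sym2.mem_iff, forall_eq_or_imp, forall_eq] at hB'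
    rw [Sym2.map_mk, Sym2.mk_isDiag_iff, hg a (by simpa using hB'.1),
      hg b (by simpa using hB'.2)] at hdiag
    exact hg₀ a hB'.1 b hB'.2 (mem_edgeFinset.1 he) hdiag
  calc 2 * tauB G ≤ 2 * #{e ∈ G.edgeFinset | (e.map g).IsDiag} := by
        grw [tauB_le_card_monochromatic G g]
    _ ≤ _ := by grw [card_le_card hsub, hcount]

/-- For every `K₅`-free graph `G` on `n` vertices,
`τ_B(G) ≤ b(G)(n - b(G))/2 + 3(n - b(G))²/16`. -/
theorem tauB_le_of_cliqueFree_five (G : SimpleGraph V) (h5 : G.CliqueFree 5) :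
    (tauB G : ℝ) ≤ (bipNum G : ℝ) * ((Fintype.card V : ℝ) - (bipNum G : ℝ)) / 2
      + 3 * ((Fintype.card V : ℝ) - (bipNum G : ℝ)) ^ 2 / 16 := by
  classical
  obtain ⟨B, hB, hBcard⟩ := exists_card_eq_bipNum G
  have hτ : 2 * tauB G ≤ #(G.edgeFinset ∩ Bᶜ.sym2) + #Bᶜ * #B := by
    simpa only [compl_compl] using (two_mul_tauB_le_of_colorable_induce G hB).trans
      (card_filter_exists_mem_le G.edgeFinset Bᶜ)
  have hTuran : 2 * 4 * #(G.edgeFinset ∩ Bᶜ.sym2) ≤ (4 - 1) * #Bᶜ ^ 2 :=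
    h5.mul_card_edgeFinset_inter_sym2_le Bᶜ
  have hcompl : (#Bᶜ : ℝ) = Fintype.card V - bipNum G := by
    rw [card_compl, Nat.cast_sub (card_le_univ B), hBcard]
  rw [← hcompl, ← hBcard]
  have hτ' : 2 * (tauB G : ℝ) ≤ #(G.edgeFinset ∩ Bᶜ.sym2) + #Bᶜ * #B := by exact_mod_cast hτ
  have hTuran' : 8 * (#(G.edgeFinset ∩ Bᶜ.sym2) : ℝ) ≤ 3 * #Bᶜ ^ 2 := by exact_mod_cast hTuran
  linarith
end

section
/- Let G be a K₆-free graph on n vertices with e edges. Then τ_B(G) ≤ 6n²/25 − e/5. -/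
open SimpleGraph Finset

variable {V : Type*} [Fintype V] [DecidableEq V]

/-!
A `K₆`-free graph has a partition into five classes with at most `2n²/5 - e` edges inside the
classes (Füredi's stability form of Turán's theorem). Such a partition is built greedily: the
neighbourhood `B` of a vertex of maximum degree is `K₅`-free and is partitioned recursively, and the
rest of the vertices form one more class; the edges inside that class are paid for by the fact that
no vertex has more than `|B|` neighbours.

Now merge the five classes into two sides in each of the ten ways that put two classes against
three. An edge between two different classes lies inside a side in four of the ten bipartitions, an
edge inside a class in all ten, so one bipartition has at most
`(4e + 6 (2n²/5 - e)) / 10 = 6n²/25 - e/5` edges inside its sides; deleting them leaves a bipartite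
graph.
-/

lemma one_sub_inv_mul_sq_add_le {k : ℝ} (hk : 1 ≤ k) (m d : ℝ) :
    (1 - k⁻¹) * d ^ 2 + 2 * (m - d) * d ≤ (1 - (k + 1)⁻¹) * m ^ 2 := by
  have hk₀ : 0 < k := by linarith
  have key : (1 - (k + 1)⁻¹) * m ^ 2 - ((1 - k⁻¹) * d ^ 2 + 2 * (m - d) * d) =
      (k * m - (k + 1) * d) ^ 2 / (k * (k + 1)) := by
    field_simp
    ring
  have : 0 ≤ (k * m - (k + 1) * d) ^ 2 / (k * (k + 1)) := by positivity
  linarith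

namespace SimpleGraph

variable {α : Type*} (G : SimpleGraph α) [DecidableRel G.Adj]

lemma card_interedges_eq_sum (s t : Finset α) :
    #(G.interedges s t) = ∑ u ∈ s, #{w ∈ t | G.Adj u w} := by
  simp only [interedges_def, card_filter, sum_product]

lemma card_interedges_comm (s t : Finset α) : #(G.interedges s t) = #(G.interedges t s) :=
  have := G.symm
  Rel.card_interedges_comm s t

lemma card_interedges_union_left [DecidableEq α] {s₁ s₂ : Finset α} (h : Disjoint s₁ s₂)
    (t : Finset α) :
    #(G.interedges (s₁ ∪ s₂) t) = #(G.interedges s₁ t) + #(G.interedges s₂ t) := by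
  rw [← card_union_of_disjoint (G.interedges_disjoint_left h t), interedges_def, union_product,
    filter_union]
  rfl

lemma card_interedges_union_right [DecidableEq α] (s : Finset α) {t₁ t₂ : Finset α}
    (h : Disjoint t₁ t₂) :
    #(G.interedges s (t₁ ∪ t₂)) = #(G.interedges s t₁) + #(G.interedges s t₂) := by
  rw [card_interedges_comm, card_interedges_union_left G h, card_interedges_comm G t₁,
    card_interedges_comm G t₂]

lemma card_interedges_add_card_interedges_sdiff [DecidableEq α] {s t : Finset α} (hts : t ⊆ s) :
    #(G.interedges s s) + #(G.interedges (s \ t) (s \ t)) =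
      #(G.interedges t t) + 2 * #(G.interedges (s \ t) s) := by
  have hd : Disjoint t (s \ t) := disjoint_sdiff
  have hs : s = t ∪ (s \ t) := (union_sdiff_of_subset hts).symm
  have hss : #(G.interedges s s) = #(G.interedges t t) + #(G.interedges t (s \ t)) +
      (#(G.interedges (s \ t) t) + #(G.interedges (s \ t) (s \ t))) := by
    rw [← card_interedges_union_right G _ hd, ← card_interedges_union_right G _ hd,
      ← card_interedges_union_left G hd, ← hs]
  have hcs : #(G.interedges (s \ t) s) =
      #(G.interedges (s \ t) t) + #(G.interedges (s \ t) (s \ t)) := by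
    rw [← card_interedges_union_right G _ hd, ← hs]
  have := G.card_interedges_comm t (s \ t)
  omega

lemma interedges_eq_empty_of_cliqueFreeOn_two {s : Finset α} (hs : G.CliqueFreeOn s 2) :
    G.interedges s s = ∅ := by
  rw [cliqueFreeOn_two] at hs
  refine filter_eq_empty_iff.2 fun p hp hadj => ?_
  rw [mem_product] at hp
  exact hs hp.1 hp.2 hadj.ne hadj

def newColorOutside [DecidableEq α] {k : ℕ} (B : Finset α) (c : α → Fin k) (x : α) :
    Fin (k + 1) :=
  if x ∈ B then (c x).castSucc else Fin.last k

lemma filter_interedges_newColorOutside_subset [DecidableEq α] {k : ℕ} (A B : Finset α)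
    (c : α → Fin k) :
    {p ∈ G.interedges A A | newColorOutside B c p.1 = newColorOutside B c p.2} ⊆
      {p ∈ G.interedges B B | c p.1 = c p.2} ∪ G.interedges (A \ B) (A \ B) := by
  intro p hp
  rw [Finset.mem_filter, mem_interedges_iff] at hp
  unfold newColorOutside at hp
  simp only [mem_union, Finset.mem_filter, mem_interedges_iff, mem_sdiff]
  by_cases h₁ : p.1 ∈ B <;> by_cases h₂ : p.2 ∈ B <;>
    simp_all [Fin.castSucc_ne_last, (Fin.castSucc_ne_last _).symm]

theorem exists_card_filter_interedges_le [DecidableEq α] {r : ℕ} (hr : 1 ≤ r) {A : Finset α}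
    (hA : G.CliqueFreeOn A (r + 1)) :
    ∃ c : α → Fin r, (#{p ∈ G.interedges A A | c p.1 = c p.2} : ℝ) ≤
      (1 - (r : ℝ)⁻¹) * #A ^ 2 - #(G.interedges A A) := by
  induction r, hr using Nat.le_induction generalizing A with
  | base => exact ⟨fun _ => 0, by simp [G.interedges_eq_empty_of_cliqueFreeOn_two hA]⟩
  | succ k hk ih =>
    obtain rfl | hAne := A.eq_empty_or_nonempty
    · exact ⟨fun _ => Fin.last k, by simp⟩
    obtain ⟨v, hv, hmax⟩ := A.exists_max_image (fun u => #{w ∈ A | G.Adj u w}) hAne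
    set B := {w ∈ A | G.Adj v w}
    have hBA : B ⊆ A := filter_subset _ _
    have hB : G.CliqueFreeOn B (k + 1) := by
      convert hA.of_succ G hv using 1
      ext
      simp [B]
    obtain ⟨c, hc⟩ := ih hB
    refine ⟨newColorOutside B c, ?_⟩
    have hmono := (card_le_card (G.filter_interedges_newColorOutside_subset A B c)).trans
      (card_union_le _ _)
    have hsplit := G.card_interedges_add_card_interedges_sdiff hBA
    have hdeg : #(G.interedges (A \ B) A) ≤ #(A \ B) * #B := by
      rw [card_interedges_eq_sum]
      exact sum_le_card_nsmul _ _ _ fun u hu => hmax u (mem_sdiff.1 hu).1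
    have hstep := one_sub_inv_mul_sq_add_le (k := k) (by exact_mod_cast hk) #A #B
    rw [card_sdiff_of_subset hBA] at hdeg
    have hBA' : #B ≤ #A := card_le_card hBA
    push_cast
    rify [hBA'] at hmono hsplit hdeg
    nlinarith

section Fintype

variable [Fintype α]

def monochromaticEdges {β : Type*} [DecidableEq β] (c : α → β) : Finset (Sym2 α) :=
  {e ∈ G.edgeFinset | (e.map c).IsDiag}

lemma card_interedges_univ : #(G.interedges univ univ) = 2 * #G.edgeFinset := by
  rw [card_interedges_eq_sum, ← sum_degrees_eq_twice_card_edges]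
  simp [← card_neighborFinset_eq_degree, neighborFinset_eq_filter]

lemma card_filter_interedges_univ [DecidableEq α] {β : Type*} [DecidableEq β] (c : α → β) :
    #{p ∈ G.interedges univ univ | c p.1 = c p.2} = 2 * #(G.monochromaticEdges c) := by
  let H := fromEdgeSet (G.monochromaticEdges c : Set (Sym2 α))
  convert card_interedges_univ H using 2
  · ext ⟨a, b⟩
    simpa [H, monochromaticEdges, mem_interedges_iff] using fun h _ => h.ne
  · congr 1
    ext e
    simp only [edgeFinset, Set.mem_toFinset, H, edgeSet_fromEdgeSet, Set.mem_sdiff, mem_coe]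
    exact ⟨fun he => ⟨he, G.not_isDiag_of_mem_edgeSet (mem_edgeFinset.1 (mem_filter.1 he).1)⟩,
      And.left⟩

theorem exists_card_monochromaticEdges_le [DecidableEq α] {r : ℕ} (hr : 1 ≤ r)
    (hG : G.CliqueFree (r + 1)) :
    ∃ c : α → Fin r, (#(G.monochromaticEdges c) : ℝ) ≤
      (1 - (r : ℝ)⁻¹) * Fintype.card α ^ 2 / 2 - #G.edgeFinset := by
  obtain ⟨c, hc⟩ := G.exists_card_filter_interedges_le hr (A := univ) hG.cliqueFreeOn
  refine ⟨c, ?_⟩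
  rw [card_filter_interedges_univ, card_interedges_univ, card_univ] at hc
  push_cast at hc
  linarith

lemma card_filter_decide_mem_eq_decide_mem (i j : Fin 5) :
    #{S ∈ powersetCard 2 univ | decide (i ∈ S) = decide (j ∈ S)} =
      if i = j then 10 else 4 := by
  revert i j
  decide

lemma sum_card_monochromaticEdges_decide_mem (c : α → Fin 5) :
    ∑ S ∈ powersetCard 2 univ, #(G.monochromaticEdges fun v => decide (c v ∈ S)) =
      4 * #G.edgeFinset + 6 * #(G.monochromaticEdges c) := by
  have hedge (e : Sym2 α) :
      #{S ∈ powersetCard 2 univ | (e.map fun v => decide (c v ∈ S)).IsDiag} =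
      4 + 6 * if (e.map c).IsDiag then 1 else 0 := by
    induction e with
    | _ a b =>
      simp only [Sym2.map_mk, Sym2.mk_isDiag_iff, card_filter_decide_mem_eq_decide_mem]
      split_ifs <;> rfl
  simp only [monochromaticEdges, card_filter]
  rw [sum_comm]
  simp only [← card_filter, hedge, sum_add_distrib, sum_const, ← mul_sum, smul_eq_mul]
  ring

lemma exists_card_monochromaticEdges_bool_le (c : α → Fin 5) :
    ∃ b : α → Bool, 10 * #(G.monochromaticEdges b) ≤
      4 * #G.edgeFinset + 6 * #(G.monochromaticEdges c) := by
  obtain ⟨S, -, hS⟩ := exists_le_of_sum_le (s := powersetCard 2 (univ : Finset (Fin 5)))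
    (f := fun S => 10 * #(G.monochromaticEdges fun v => decide (c v ∈ S)))
    (g := fun _ => 4 * #G.edgeFinset + 6 * #(G.monochromaticEdges c)) (by decide) (by
      rw [← mul_sum, sum_card_monochromaticEdges_decide_mem, sum_const, card_powersetCard]
      norm_num [Nat.choose])
  exact ⟨_, hS⟩

lemma tauB_le_card_monochromaticEdges (b : α → Bool) :
    tauB G ≤ #(G.monochromaticEdges b) := by
  refine Nat.sInf_le ⟨G.monochromaticEdges b, fun e he => mem_edgeFinset.1 (mem_filter.1 he).1,
    ?_, rfl⟩
  have hcol : (G.deleteEdges (G.monochromaticEdges b)).Coloring Bool :=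
    Coloring.mk b fun {x y} hxy hb => by
      rw [deleteEdges_adj] at hxy
      refine hxy.2 (mem_filter.2 ⟨mem_edgeFinset.2 hxy.1, ?_⟩)
      rwa [Sym2.map_mk, Sym2.mk_isDiag_iff]
  simpa using hcol.colorable

end Fintype

end SimpleGraph

/-- For every `K₆`-free graph `G` on `n` vertices with `e` edges, `τ_B(G) ≤ 6n²/25 - e/5`. -/
theorem tauB_le_of_cliqueFree_six (G : SimpleGraph V) [DecidableRel G.Adj]
    (h6 : G.CliqueFree 6) :
    (tauB G : ℝ) ≤ 6 * (Fintype.card V : ℝ) ^ 2 / 25 - (G.edgeFinset.card : ℝ) / 5 := by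
  obtain ⟨c, hc⟩ := G.exists_card_monochromaticEdges_le (r := 5) (by norm_num) h6
  obtain ⟨b, hb⟩ := G.exists_card_monochromaticEdges_bool_le c
  have hτ := G.tauB_le_card_monochromaticEdges b
  rify at hb hτ
  norm_num at hc
  linarith
end
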